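/- If ‖F(Ω)‖₁ ≤ N̄ for all Ω ∈ B(Ω₀,ρ) and δ > 0 satisfies ((1−α)/B(α))N̄ + (δ^α/(B(α)Γ(α)))N̄ ≤ ρ, then the Picard operator Θ maps W into itself, i.e., for every Ω ∈ W and every t ∈ [0,δ], ‖(ΘΩ)(t) − Ω₀‖₁ ≤ ρ. -/

import Mathlib

open Set MeasureTheory

/-- State space `ℝ³` with the `ℓ¹` norm. -/
noncomputable abbrev V := PiLp 1 (fun _ : Fin 3 => ℝ)

/-- The Picard operator associated with the ABC fractional SIRS integral equation. -/
noncomputable def picard (α B : ℝ) (Ω₀ : V) (F : V → V) (Ω : ℝ → V) (t : ℝ) : V :=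
  Ω₀ + ((1 - α) / B) • F (Ω t)
    + (α / (B * Real.Gamma α)) • ∫ p in (0:ℝ)..t, ((t - p) ^ (α - 1)) • F (Ω p)

/-! By the triangle inequality, `‖(ΘΩ)(t) - Ω₀‖` is at most `((1-α)/B) N` plus
`α N / (B Γ(α))` times `∫₀ᵗ (t-p)^(α-1) dp = t^α / α`, and `t^α ≤ δ^α`. -/

section RiemannLiouvilleKernel

variable {α : ℝ}

lemma intervalIntegrable_sub_rpow (hα : 0 < α) (t : ℝ) :
    IntervalIntegrable (fun p => (t - p) ^ (α - 1)) volume 0 t := by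
  simpa using (intervalIntegral.intervalIntegrable_rpow' (r := α - 1) (a := t) (b := 0)
    (by linarith)).comp_sub_left t

lemma integral_sub_rpow (hα : 0 < α) (t : ℝ) :
    ∫ p in (0:ℝ)..t, (t - p) ^ (α - 1) = t ^ α / α := by
  rw [intervalIntegral.integral_comp_sub_left (fun x => x ^ (α - 1)), sub_self, sub_zero,
    integral_rpow (Or.inl (by linarith)), sub_add_cancel, Real.zero_rpow hα.ne', sub_zero]

lemma norm_integral_sub_rpow_smul_le {E : Type*} [NormedAddCommGroup E] [NormedSpace ℝ E]
    {t N : ℝ} {f : ℝ → E} (hα : 0 < α) (ht : 0 ≤ t) (hf : ∀ p ∈ Icc 0 t, ‖f p‖ ≤ N) :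
    ‖∫ p in (0:ℝ)..t, (t - p) ^ (α - 1) • f p‖ ≤ t ^ α / α * N := by
  calc ‖∫ p in (0:ℝ)..t, (t - p) ^ (α - 1) • f p‖
      ≤ ∫ p in (0:ℝ)..t, (t - p) ^ (α - 1) * N := by
        refine intervalIntegral.norm_integral_le_of_norm_le ht (ae_of_all _ fun p hp => ?_)
          ((intervalIntegrable_sub_rpow hα t).mul_const N)
        have hw : 0 ≤ (t - p) ^ (α - 1) := Real.rpow_nonneg (by linarith [hp.2]) _
        rw [norm_smul, Real.norm_of_nonneg hw]
        exact mul_le_mul_of_nonneg_left (hf p (Ioc_subset_Icc_self hp)) hw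
    _ = t ^ α / α * N := by rw [intervalIntegral.integral_mul_const, integral_sub_rpow hα]

end RiemannLiouvilleKernel

lemma norm_picard_sub_le {α B N t : ℝ} {Ω₀ : V} {F : V → V} {Ω : ℝ → V}
    (hα : 0 < α) (hα1 : α < 1) (hB : 0 < B) (ht : 0 ≤ t)
    (hF : ∀ p ∈ Icc 0 t, ‖F (Ω p)‖ ≤ N) :
    ‖picard α B Ω₀ F Ω t - Ω₀‖ ≤ (1 - α) / B * N + t ^ α / (B * Real.Gamma α) * N := by
  have hBΓ : 0 < B * Real.Gamma α := mul_pos hB (Real.Gamma_pos_of_pos hα)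
  have hc₁ : 0 ≤ (1 - α) / B := div_nonneg (by linarith) hB.le
  have hc₂ : 0 ≤ α / (B * Real.Gamma α) := div_nonneg hα.le hBΓ.le
  rw [picard, add_assoc, add_sub_cancel_left]
  calc _ ≤ (1 - α) / B * ‖F (Ω t)‖
        + α / (B * Real.Gamma α) * ‖∫ p in (0:ℝ)..t, (t - p) ^ (α - 1) • F (Ω p)‖ := by
        refine (norm_add_le _ _).trans_eq ?_
        rw [norm_smul, norm_smul, Real.norm_of_nonneg hc₁, Real.norm_of_nonneg hc₂]
    _ ≤ (1 - α) / B * N + α / (B * Real.Gamma α) * (t ^ α / α * N) := by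
        gcongr
        · exact hF t ⟨ht, le_rfl⟩
        · exact norm_integral_sub_rpow_smul_le hα ht hF
    _ = (1 - α) / B * N + t ^ α / (B * Real.Gamma α) * N := by
        field_simp

theorem picard_maps_W_into_W_general (α B N ρ δ : ℝ) (Ω₀ : V) (F : V → V)
    (hα : 0 < α) (hα1 : α < 1) (hB : 0 < B) (hN : 0 < N)
    (hFb : ∀ x ∈ Metric.closedBall Ω₀ ρ, ‖F x‖ ≤ N)
    (hδρ : (1 - α) / B * N + δ ^ α / (B * Real.Gamma α) * N ≤ ρ)
    (Ω : ℝ → V)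
    (hball : ∀ t ∈ Icc (0:ℝ) δ, Ω t ∈ Metric.closedBall Ω₀ ρ) :
    ∀ t ∈ Icc (0:ℝ) δ, ‖picard α B Ω₀ F Ω t - Ω₀‖ ≤ ρ := by
  rintro t ⟨ht0, htδ⟩
  have hF : ∀ p ∈ Icc 0 t, ‖F (Ω p)‖ ≤ N := fun p hp =>
    hFb _ (hball p ⟨hp.1, hp.2.trans htδ⟩)
  calc ‖picard α B Ω₀ F Ω t - Ω₀‖
      ≤ (1 - α) / B * N + t ^ α / (B * Real.Gamma α) * N :=
        norm_picard_sub_le hα hα1 hB ht0 hF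
    _ ≤ (1 - α) / B * N + δ ^ α / (B * Real.Gamma α) * N := by
        gcongr
    _ ≤ ρ := hδρ

theorem picard_maps_W_into_W (α B N ρ δ : ℝ) (Ω₀ : V) (F : V → V)
    (hα : 0 < α) (hα1 : α < 1) (hB : 0 < B) (hN : 0 < N) (hρ : 0 < ρ) (hδ : 0 < δ)
    (hFc : Continuous F)
    (hFb : ∀ x ∈ Metric.closedBall Ω₀ ρ, ‖F x‖ ≤ N)
    (hδρ : (1 - α) / B * N + δ ^ α / (B * Real.Gamma α) * N ≤ ρ)
    (Ω : ℝ → V) (hc : ContinuousOn Ω (Icc 0 δ)) (h0 : Ω 0 = Ω₀)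
    (hball : ∀ t ∈ Icc (0:ℝ) δ, Ω t ∈ Metric.closedBall Ω₀ ρ) :
    ∀ t ∈ Icc (0:ℝ) δ, ‖picard α B Ω₀ F Ω t - Ω₀‖ ≤ ρ :=
  picard_maps_W_into_W_general α B N ρ δ Ω₀ F hα hα1 hB hN hFb hδρ Ω hball
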